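/- arXiv:1704.08136 — 2 statements merged into one kernel-verified Lean document; each statement's English description precedes it below -/
import Mathlib

section
/- Suppose n = k² and m = lk + r with 0 ≤ l < k, 0 ≤ r < k, and (k−r)(k−l) ≥ lk. Then every m×n Sudoku rectangle can be completed to an n×n Sudoku square. -/
/-- `S` (restricted to rows and columns below k²) is a Sudoku square of order
n = k²: entries in {1,…,k²}, and each symbol occurs at most once (hence, the
square being full, exactly once) in each row, each column, and each aligned
k×k block. -/
def IsSudokuSquare (k : ℕ) (S : ℕ → ℕ → ℕ) : Prop :=
  (∀ i < k ^ 2, ∀ j < k ^ 2, S i j ∈ Finset.Icc 1 (k ^ 2)) ∧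
  (∀ i < k ^ 2, ∀ j₁ < k ^ 2, ∀ j₂ < k ^ 2, S i j₁ = S i j₂ → j₁ = j₂) ∧
  (∀ j < k ^ 2, ∀ i₁ < k ^ 2, ∀ i₂ < k ^ 2, S i₁ j = S i₂ j → i₁ = i₂) ∧
  (∀ bi < k, ∀ bj < k, ∀ x₁ < k, ∀ y₁ < k, ∀ x₂ < k, ∀ y₂ < k,
    S (bi * k + x₁) (bj * k + y₁) = S (bi * k + x₂) (bj * k + y₂) → x₁ = x₂ ∧ y₁ = y₂)

/-- `R` (restricted to its first m rows, all columns below k²) is an m×n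
Sudoku rectangle for n = k²: the first m rows are filled with entries from
{1,…,k²} satisfying the row, column and block conditions. -/
def IsSudokuRect (k m : ℕ) (R : ℕ → ℕ → ℕ) : Prop :=
  (∀ i < m, ∀ j < k ^ 2, R i j ∈ Finset.Icc 1 (k ^ 2)) ∧
  (∀ i < m, ∀ j₁ < k ^ 2, ∀ j₂ < k ^ 2, R i j₁ = R i j₂ → j₁ = j₂) ∧
  (∀ j < k ^ 2, ∀ i₁ < m, ∀ i₂ < m, R i₁ j = R i₂ j → i₁ = i₂) ∧
  (∀ bi, ∀ bj < k, ∀ x₁ < k, ∀ y₁ < k, ∀ x₂ < k, ∀ y₂ < k,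
    bi * k + x₁ < m → bi * k + x₂ < m →
    R (bi * k + x₁) (bj * k + y₁) = R (bi * k + x₂) (bj * k + y₂) → x₁ = x₂ ∧ y₁ = y₂)

/-- The Sudoku square `S` is a completion of the m×n Sudoku rectangle `R`. -/
def CompletesTo (k m : ℕ) (R S : ℕ → ℕ → ℕ) : Prop :=
  IsSudokuSquare k S ∧ ∀ i < m, ∀ j < k ^ 2, S i j = R i j

/-!
Complete the partially filled band `l` first. In each block column, the `(k - r) * k` symbols
missing from the partial block have to be spread over the `k` columns of the block, `k - r` per
column, each into a column that does not yet contain it. By Hall's theorem with multiplicities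
this is possible as soon as every set `S` of missing symbols has at least `#S / (k - r)` free
columns. If some column is free for no symbol of `S`, all of `S` sits in that column within the
`l * k` rows above the band, so `#S ≤ l * k ≤ (k - r) * (k - l)`, while every symbol has at least
`k - l` free columns. The graph joining each symbol to its assigned columns is then
`(k - r)`-regular, so by König's theorem it splits into `k - r` perfect matchings: these are the
new rows. Every later band starts empty (`r = 0`), where Hall's condition follows by double
counting alone.
-/

namespace Finset

variable {ι α : Type*} [DecidableEq α] {A : Finset ι} {B : Finset α}

theorem exists_injOn_of_card_le_card_biUnion [Nonempty α] (t : ι → Finset α)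
    (h : ∀ S ⊆ A, #S ≤ #(S.biUnion t)) : ∃ f : ι → α, Set.InjOn f A ∧ ∀ a ∈ A, f a ∈ t a := by
  classical
  have hall : ∀ S : Finset A, #S ≤ #(S.biUnion fun a => t a) := fun S => by
    have := h (S.image Subtype.val) fun a ha => by
      obtain ⟨x, -, rfl⟩ := mem_image.mp ha
      exact x.2
    rwa [card_image_of_injective _ Subtype.val_injective, image_biUnion] at this
  obtain ⟨f, hf_inj, hf_mem⟩ := (all_card_le_biUnion_card_iff_exists_injective _).mp hall
  refine ⟨fun a => if ha : a ∈ A then f ⟨a, ha⟩ else Classical.arbitrary α, ?_, ?_⟩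
  · intro a ha a' ha' he
    simp only [dif_pos (mem_coe.mp ha), dif_pos (mem_coe.mp ha')] at he
    exact congrArg Subtype.val (hf_inj he)
  · intro a ha
    simpa [dif_pos ha] using hf_mem ⟨a, ha⟩

theorem exists_card_fiber_le_of_card_le_mul_card_biUnion [Nonempty α] (t : ι → Finset α)
    (c : ℕ) (h : ∀ S ⊆ A, #S ≤ c * #(S.biUnion t)) :
    ∃ g : ι → α, (∀ a ∈ A, g a ∈ t a) ∧ ∀ b, #{a ∈ A | g a = b} ≤ c := by
  -- Hall's theorem for `c` copies of every target.
  obtain ⟨f, hf_inj, hf_mem⟩ := exists_injOn_of_card_le_card_biUnion (A := A)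
    (fun a => t a ×ˢ range c) fun S hS => by
      have : (S.biUnion fun a => t a ×ˢ range c) = S.biUnion t ×ˢ range c := by
        ext; simp only [mem_biUnion, mem_product]; tauto
      rw [this, card_product, card_range, mul_comm]
      exact h S hS
  refine ⟨fun a => (f a).1, fun a ha => (mem_product.mp (hf_mem a ha)).1, fun b => ?_⟩
  calc #{a ∈ A | (f a).1 = b} ≤ #(range c) := by
        refine card_le_card_of_injOn (fun a => (f a).2) (fun a ha => ?_) fun a ha a' ha' he => ?_
        · exact (mem_product.mp (hf_mem a (mem_filter.mp ha).1)).2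
        · simp only [coe_filter, Set.mem_ofPred_eq] at ha ha'
          exact hf_inj ha.1 ha'.1 (Prod.ext (ha.2.trans ha'.2.symm) he)
    _ = c := card_range c

theorem exists_card_fiber_eq_of_card_le_mul_card_biUnion [Nonempty α] (t : ι → Finset α) (c : ℕ)
    (htB : ∀ a ∈ A, t a ⊆ B) (hA : #A = c * #B)
    (h : ∀ S ⊆ A, #S ≤ c * #(S.biUnion t)) :
    ∃ g : ι → α, (∀ a ∈ A, g a ∈ t a) ∧ ∀ b ∈ B, #{a ∈ A | g a = b} = c := by
  obtain ⟨g, hg_mem, hg_fiber⟩ := exists_card_fiber_le_of_card_le_mul_card_biUnion t c h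
  refine ⟨g, hg_mem, (sum_eq_sum_iff_of_le fun b _ => hg_fiber b).mp ?_⟩
  rw [← card_eq_sum_card_fiberwise fun a ha => htB a ha (hg_mem a ha), hA, sum_const, smul_eq_mul,
    mul_comm]

theorem exists_bijOn_of_regular [Nonempty α] {E : ι → Finset α} {d : ℕ} (hd : 0 < d)
    (hcard : #A = #B) (hEB : ∀ a ∈ A, E a ⊆ B) (hdeg : ∀ a ∈ A, #(E a) = d)
    (hcodeg : ∀ b ∈ B, #{a ∈ A | b ∈ E a} = d) :
    ∃ g : ι → α, (∀ a ∈ A, g a ∈ E a) ∧ Set.BijOn g A B := by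
  obtain ⟨g, hg_inj, hg_mem⟩ := exists_injOn_of_card_le_card_biUnion E fun S hS => by
    refine Nat.le_of_mul_le_mul_right (card_mul_le_card_mul (fun a b => b ∈ E a)
      (m := d) (n := d) (fun a ha => ?_) fun b hb => ?_) hd
    · rw [← hdeg a (hS ha), bipartiteAbove, filter_mem_eq_inter,
        inter_eq_right.mpr (subset_biUnion_of_mem E ha)]
    · obtain ⟨a, ha, hba⟩ := mem_biUnion.mp hb
      exact (card_le_card (filter_subset_filter _ hS)).trans_eq (hcodeg b (hEB a (hS ha) hba))
  have hmaps : Set.MapsTo g A B := fun a ha => hEB a ha (hg_mem a ha)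
  exact ⟨g, hg_mem, hmaps, hg_inj, surjOn_of_injOn_of_card_le g hmaps hg_inj hcard.ge⟩

theorem card_filter_mem_erase_add_one {E : ι → Finset α} {g : ι → α} (hg : Set.BijOn g A B)
    (hgE : ∀ a ∈ A, g a ∈ E a) {b : α} (hb : b ∈ B) :
    #{a ∈ A | b ∈ (E a).erase (g a)} + 1 = #{a ∈ A | b ∈ E a} := by
  classical
  obtain ⟨a₀, ha₀, rfl⟩ := hg.surjOn hb
  have : {a ∈ A | g a₀ ∈ (E a).erase (g a)} = {a ∈ A | g a₀ ∈ E a}.erase a₀ := by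
    ext a
    simp only [mem_filter, mem_erase]
    constructor
    · rintro ⟨ha, hne, hmem⟩
      exact ⟨fun h => hne (h ▸ rfl), ha, hmem⟩
    · rintro ⟨hne, ha, hmem⟩
      exact ⟨ha, fun h => hne (hg.injOn ha ha₀ h.symm), hmem⟩
  rw [this, card_erase_add_one (mem_filter.mpr ⟨ha₀, hgE a₀ ha₀⟩)]

/-- König's theorem: a `d`-regular bipartite graph splits into `d` perfect matchings `σ x`. -/
theorem exists_bijOn_family_of_regular [Nonempty α] (d : ℕ) (E : ι → Finset α)
    (hcard : #A = #B) (hEB : ∀ a ∈ A, E a ⊆ B) (hdeg : ∀ a ∈ A, #(E a) = d)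
    (hcodeg : ∀ b ∈ B, #{a ∈ A | b ∈ E a} = d) :
    ∃ σ : ℕ → ι → α, (∀ x < d, ∀ a ∈ A, σ x a ∈ E a) ∧ (∀ x < d, Set.BijOn (σ x) A B) ∧
      ∀ a ∈ A, ∀ x < d, ∀ y < d, σ x a = σ y a → x = y := by
  induction d generalizing E with
  | zero => exact ⟨fun _ a => Classical.arbitrary α, by simp, by simp, by simp⟩
  | succ d ih =>
    obtain ⟨g, hgE, hg⟩ := exists_bijOn_of_regular d.succ_pos hcard hEB hdeg hcodeg
    obtain ⟨σ, hσE, hσ, hσ_ne⟩ := ih (fun a => (E a).erase (g a))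
      (fun a ha => (erase_subset _ _).trans (hEB a ha))
      (fun a ha => by rw [card_erase_of_mem (hgE a ha), hdeg a ha, Nat.add_sub_cancel])
      (fun b hb => by
        have := card_filter_mem_erase_add_one hg hgE hb
        rw [hcodeg b hb] at this
        omega)
    refine ⟨fun x => if x = d then g else σ x, fun x hx a ha => ?_, fun x hx => ?_, ?_⟩
    · dsimp only
      split_ifs with h
      · exact hgE a ha
      · exact mem_of_mem_erase (hσE x (by omega) a ha)
    · dsimp only
      split_ifs with h
      · exact hg
      · exact hσ x (by omega)
    · intro a ha x hx y hy hxy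
      have hσ_ne_g : ∀ z < d, σ z a ≠ g a := fun z hz => ne_of_mem_erase (hσE z hz a ha)
      dsimp only at hxy
      split_ifs at hxy with h₁ h₂ h₂
      · omega
      · exact absurd hxy.symm (hσ_ne_g y (by omega))
      · exact absurd hxy (hσ_ne_g x (by omega))
      · exact hσ_ne a ha x (by omega) y (by omega) hxy

end Finset

namespace IsSudokuRect

variable {k m : ℕ} {R : ℕ → ℕ → ℕ}

theorem block_inj (hR : IsSudokuRect k m R) {i₁ i₂ j₁ j₂ : ℕ} (hi₁ : i₁ < m)
    (hi₂ : i₂ < m) (hj₁ : j₁ < k ^ 2) (hi : i₁ / k = i₂ / k) (hj : j₁ / k = j₂ / k)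
    (h : R i₁ j₁ = R i₂ j₂) : i₁ = i₂ ∧ j₁ = j₂ := by
  have hk : 0 < k := Nat.pos_of_ne_zero fun hk => by simp [hk] at hj₁
  have hbj : j₁ / k < k := Nat.div_lt_of_lt_mul (by rwa [← sq])
  have e₁ : i₁ / k * k + i₁ % k = i₁ := Nat.div_add_mod' i₁ k
  have e₂ : i₁ / k * k + i₂ % k = i₂ := by rw [hi, Nat.div_add_mod']
  have e₃ : j₁ / k * k + j₁ % k = j₁ := Nat.div_add_mod' j₁ k
  have e₄ : j₁ / k * k + j₂ % k = j₂ := by rw [hj, Nat.div_add_mod']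
  obtain ⟨hx, hy⟩ := hR.2.2.2 _ _ hbj _ (Nat.mod_lt i₁ hk) _ (Nat.mod_lt j₁ hk) _
    (Nat.mod_lt i₂ hk) _ (Nat.mod_lt j₂ hk) (by rwa [e₁]) (by rwa [e₂]) (by rwa [e₁, e₂, e₃, e₄])
  exact ⟨by rw [← e₁, ← e₂, hx], by rw [← e₃, ← e₄, hy]⟩

theorem of_block_inj (hent : ∀ i < m, ∀ j < k ^ 2, R i j ∈ Finset.Icc 1 (k ^ 2))
    (hrow : ∀ i < m, ∀ j₁ < k ^ 2, ∀ j₂ < k ^ 2, R i j₁ = R i j₂ → j₁ = j₂)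
    (hcol : ∀ j < k ^ 2, ∀ i₁ < m, ∀ i₂ < m, R i₁ j = R i₂ j → i₁ = i₂)
    (hblock : ∀ i₁ < m, ∀ i₂ < m, ∀ j₁ < k ^ 2, ∀ j₂ < k ^ 2, i₁ / k = i₂ / k → j₁ / k = j₂ / k →
      R i₁ j₁ = R i₂ j₂ → i₁ = i₂ ∧ j₁ = j₂) :
    IsSudokuRect k m R := by
  refine ⟨hent, hrow, hcol, fun bi bj hbj x₁ hx₁ y₁ hy₁ x₂ hx₂ y₂ hy₂ hi₁ hi₂ h => ?_⟩
  have hk : 0 < k := by omega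
  have hcol_lt : ∀ y < k, bj * k + y < k ^ 2 := fun y hy => by nlinarith
  have hdiv : ∀ {b y}, y < k → (b * k + y) / k = b := fun hy => by
    rw [mul_comm, Nat.mul_add_div hk, Nat.div_eq_of_lt hy, add_zero]
  have := hblock _ hi₁ _ hi₂ _ (hcol_lt y₁ hy₁) _ (hcol_lt y₂ hy₂) (by rw [hdiv hx₁, hdiv hx₂])
    (by rw [hdiv hy₁, hdiv hy₂]) h
  omega

theorem mono {m' : ℕ} (hR : IsSudokuRect k m R) (hm : m' ≤ m) :
    IsSudokuRect k m' R :=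
  ⟨fun i hi => hR.1 i (by omega), fun i hi => hR.2.1 i (by omega),
    fun j hj i₁ hi₁ i₂ hi₂ => hR.2.2.1 j hj i₁ (by omega) i₂ (by omega),
    fun bi bj hbj x₁ hx₁ y₁ hy₁ x₂ hx₂ y₂ hy₂ hi₁ hi₂ =>
      hR.2.2.2 bi bj hbj x₁ hx₁ y₁ hy₁ x₂ hx₂ y₂ hy₂ (by omega) (by omega)⟩

theorem isSudokuSquare (hR : IsSudokuRect k (k ^ 2) R) : IsSudokuSquare k R :=
  ⟨hR.1, hR.2.1, hR.2.2.1, fun bi hbi bj hbj x₁ hx₁ y₁ hy₁ x₂ hx₂ y₂ hy₂ =>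
    hR.2.2.2 bi bj hbj x₁ hx₁ y₁ hy₁ x₂ hx₂ y₂ hy₂ (by nlinarith) (by nlinarith)⟩

theorem exists_eq (hR : IsSudokuRect k m R) {i s : ℕ} (hi : i < m)
    (hs : s ∈ Finset.Icc 1 (k ^ 2)) : ∃ j < k ^ 2, R i j = s := by
  have hrow : (Finset.range (k ^ 2)).image (R i) = Finset.Icc 1 (k ^ 2) := by
    refine Finset.eq_of_subset_of_card_le (fun s hs => ?_) ?_
    · obtain ⟨j, hj, rfl⟩ := Finset.mem_image.mp hs
      exact hR.1 i hi j (Finset.mem_range.mp hj)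
    · rw [Nat.card_Icc, Finset.card_image_of_injOn fun j₁ hj₁ j₂ hj₂ =>
        hR.2.1 i hi j₁ (Finset.mem_range.mp hj₁) j₂ (Finset.mem_range.mp hj₂), Finset.card_range]
      omega
  rw [← hrow] at hs
  obtain ⟨j, hj, rfl⟩ := Finset.mem_image.mp hs
  exact ⟨j, Finset.mem_range.mp hj, rfl⟩

end IsSudokuRect

namespace Sudoku

open Finset

def blockCols (k b : ℕ) : Finset ℕ := {j ∈ range (k ^ 2) | j / k = b}

def colSymbols (m : ℕ) (R : ℕ → ℕ → ℕ) (j : ℕ) : Finset ℕ := (range m).image (R · j)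

def partialBlockSymbols (k l r : ℕ) (R : ℕ → ℕ → ℕ) (b : ℕ) : Finset ℕ :=
  (Ico (l * k) (l * k + r) ×ˢ blockCols k b).image fun p => R p.1 p.2

def missingSymbols (k l r : ℕ) (R : ℕ → ℕ → ℕ) (b : ℕ) : Finset ℕ :=
  Icc 1 (k ^ 2) \ partialBlockSymbols k l r R b

def freeCols (k l r : ℕ) (R : ℕ → ℕ → ℕ) (b s : ℕ) : Finset ℕ :=
  {j ∈ blockCols k b | s ∉ colSymbols (l * k + r) R j}

variable {k l r m : ℕ} {R : ℕ → ℕ → ℕ}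

@[simp]
theorem mem_blockCols {b j : ℕ} : j ∈ blockCols k b ↔ j < k ^ 2 ∧ j / k = b := by
  simp [blockCols]

theorem card_blockCols {b : ℕ} (hb : b < k) : #(blockCols k b) = k := by
  have hk : 0 < k := by omega
  have : blockCols k b = Ico (b * k) (b * k + k) := by
    ext j
    simp only [mem_blockCols, mem_Ico, Nat.div_eq_iff hk]
    constructor
    · rintro ⟨-, h₁, h₂⟩
      omega
    · rintro ⟨h₁, h₂⟩
      exact ⟨by nlinarith, h₁, by omega⟩
  rw [this, Nat.card_Ico, Nat.add_sub_cancel_left]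

@[simp]
theorem mem_colSymbols {j s : ℕ} : s ∈ colSymbols m R j ↔ ∃ i < m, R i j = s := by
  simp [colSymbols]

theorem mem_partialBlockSymbols {b s : ℕ} :
    s ∈ partialBlockSymbols k l r R b ↔
      ∃ i, l * k ≤ i ∧ i < l * k + r ∧ ∃ j, (j < k ^ 2 ∧ j / k = b) ∧ R i j = s := by
  simp [partialBlockSymbols, and_assoc]

theorem div_eq_of_mem_band (hr : r < k) {i : ℕ} (h₁ : l * k ≤ i) (h₂ : i < l * k + r) :
    i / k = l :=
  Nat.div_eq_of_lt_le h₁ (by rw [add_one_mul]; omega)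

theorem colSymbols_subset (hR : IsSudokuRect k m R) {j : ℕ} (hj : j < k ^ 2) :
    colSymbols m R j ⊆ Icc 1 (k ^ 2) := by
  intro s hs
  obtain ⟨i, hi, rfl⟩ := mem_colSymbols.mp hs
  exact hR.1 i hi j hj

theorem card_colSymbols (hR : IsSudokuRect k m R) {j : ℕ} (hj : j < k ^ 2) :
    #(colSymbols m R j) = m := by
  rw [colSymbols, card_image_of_injOn, card_range]
  intro i₁ hi₁ i₂ hi₂ h
  exact hR.2.2.1 j hj i₁ (mem_range.mp hi₁) i₂ (mem_range.mp hi₂) h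

theorem card_missingSymbols (hr : r < k) (hR : IsSudokuRect k (l * k + r) R) {b : ℕ}
    (hb : b < k) :
    #(missingSymbols k l r R b) = (k - r) * k := by
  have hsub : partialBlockSymbols k l r R b ⊆ Icc 1 (k ^ 2) := by
    intro s hs
    obtain ⟨i, -, hi, j, ⟨hj, -⟩, rfl⟩ := mem_partialBlockSymbols.mp hs
    exact hR.1 i hi j hj
  have hcard : #(partialBlockSymbols k l r R b) = r * k := by
    rw [partialBlockSymbols, card_image_of_injOn, card_product, Nat.card_Ico,
      Nat.add_sub_cancel_left, card_blockCols hb]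
    rintro ⟨i₁, j₁⟩ h₁ ⟨i₂, j₂⟩ h₂ h
    simp only [coe_product, Set.mem_prod, coe_Ico, Set.mem_Ico, mem_coe, mem_blockCols] at h₁ h₂
    obtain ⟨rfl, rfl⟩ := hR.block_inj h₁.1.2 h₂.1.2 h₁.2.1
      (by rw [div_eq_of_mem_band hr h₁.1.1 h₁.1.2, div_eq_of_mem_band hr h₂.1.1 h₂.1.2])
      (h₁.2.2.trans h₂.2.2.symm) h
    rfl
  rw [missingSymbols, card_sdiff_of_subset hsub, hcard, Nat.card_Icc, Nat.sub_mul, sq]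
  omega

theorem card_filter_mem_partialBlockSymbols (hr : r < k) (hR : IsSudokuRect k (l * k + r) R)
    {s : ℕ} (hs : s ∈ Icc 1 (k ^ 2)) :
    #{b ∈ range k | s ∈ partialBlockSymbols k l r R b} = r := by
  -- Each filled row of the band meets `s` in exactly one block, and each block at most once.
  let meets (i b : ℕ) : Prop := ∃ j, (j < k ^ 2 ∧ j / k = b) ∧ R i j = s
  have hrows : #(Ico (l * k) (l * k + r)) = r := by rw [Nat.card_Ico, Nat.add_sub_cancel_left]
  refine le_antisymm ?_ ?_
  · refine (card_le_card_of_forall_subsingleton' meets (fun b hb => ?_) fun i hi => ?_).trans_eq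
      hrows
    · obtain ⟨i, h₁, h₂, hmeets⟩ := mem_partialBlockSymbols.mp (mem_filter.mp hb).2
      exact ⟨i, mem_Ico.mpr ⟨h₁, h₂⟩, hmeets⟩
    · rintro b₁ ⟨-, j₁, ⟨hj₁, rfl⟩, h₁⟩ b₂ ⟨-, j₂, ⟨hj₂, rfl⟩, h₂⟩
      rw [hR.2.1 i (mem_Ico.mp hi).2 j₁ hj₁ j₂ hj₂ (h₁.trans h₂.symm)]
  · refine hrows.symm.trans_le (card_le_card_of_forall_subsingleton meets (fun i hi => ?_)
      fun b _ => ?_)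
    · obtain ⟨h₁, h₂⟩ := mem_Ico.mp hi
      obtain ⟨j, hj, hjs⟩ := hR.exists_eq h₂ hs
      exact ⟨j / k, mem_filter.mpr ⟨mem_range.mpr (Nat.div_lt_of_lt_mul (by rwa [← sq])),
        mem_partialBlockSymbols.mpr ⟨i, h₁, h₂, j, ⟨hj, rfl⟩, hjs⟩⟩, j, ⟨hj, rfl⟩, hjs⟩
    · rintro i₁ ⟨hi₁, j₁, ⟨hj₁, hb₁⟩, h₁⟩ i₂ ⟨hi₂, j₂, ⟨-, hb₂⟩, h₂⟩
      obtain ⟨hi₁l, hi₁r⟩ := mem_Ico.mp hi₁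
      obtain ⟨hi₂l, hi₂r⟩ := mem_Ico.mp hi₂
      exact (hR.block_inj hi₁r hi₂r hj₁ (by rw [div_eq_of_mem_band hr hi₁l hi₁r,
        div_eq_of_mem_band hr hi₂l hi₂r]) (hb₁.trans hb₂.symm) (h₁.trans h₂.symm)).1

theorem card_filter_mem_missingSymbols (hr : r < k) (hR : IsSudokuRect k (l * k + r) R)
    {s : ℕ} (hs : s ∈ Icc 1 (k ^ 2)) :
    #{b ∈ range k | s ∈ missingSymbols k l r R b} = k - r := by
  have := card_filter_add_card_filter_not (s := range k) (s ∈ partialBlockSymbols k l r R ·)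
  rw [card_filter_mem_partialBlockSymbols hr hR hs, card_range] at this
  simp only [missingSymbols, mem_sdiff, hs, true_and]
  omega

theorem exists_lt_of_mem_colSymbols_of_mem_missingSymbols {j s : ℕ} (hj : j < k ^ 2)
    (hs : s ∈ missingSymbols k l r R (j / k)) (h : s ∈ colSymbols (l * k + r) R j) :
    ∃ i < l * k, R i j = s := by
  obtain ⟨i, hi, rfl⟩ := mem_colSymbols.mp h
  refine ⟨i, Nat.lt_of_not_le fun hli => (mem_sdiff.mp hs).2 ?_, rfl⟩
  exact mem_partialBlockSymbols.mpr ⟨i, hli, hi, j, ⟨hj, rfl⟩, rfl⟩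

theorem sub_le_card_freeCols (hR : IsSudokuRect k (l * k + r) R) {b s : ℕ} (hb : b < k)
    (hs : s ∈ missingSymbols k l r R b) : k - l ≤ #(freeCols k l r R b s) := by
  -- `s` occurs at most once in each of the `l` full bands above block column `b`.
  have hocc : #{j ∈ blockCols k b | s ∈ colSymbols (l * k + r) R j} ≤ l := by
    refine (card_range l).le.trans' (card_le_card_of_forall_subsingleton
      (fun j t => ∃ i < l * k, i / k = t ∧ R i j = s) (fun j hj => ?_) fun t _ => ?_)
    · obtain ⟨hjb, hjs⟩ := mem_filter.mp hj
      obtain ⟨hjk, rfl⟩ := mem_blockCols.mp hjb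
      obtain ⟨i, hi, his⟩ := exists_lt_of_mem_colSymbols_of_mem_missingSymbols hjk hs hjs
      exact ⟨i / k, mem_range.mpr (Nat.div_lt_of_lt_mul (by rwa [mul_comm])), i, hi, rfl, his⟩
    · rintro j₁ ⟨hj₁, i₁, hi₁, hit₁, h₁⟩ j₂ ⟨hj₂, i₂, hi₂, hit₂, h₂⟩
      obtain ⟨hj₁k, hb₁⟩ := mem_blockCols.mp (mem_filter.mp hj₁).1
      have hb₂ := (mem_blockCols.mp (mem_filter.mp hj₂).1).2
      exact (hR.block_inj (m := l * k + r) (by omega) (by omega) hj₁k (hit₁.trans hit₂.symm)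
        (hb₁.trans hb₂.symm) (h₁.trans h₂.symm)).2
  have := card_filter_add_card_filter_not (s := blockCols k b) (s ∈ colSymbols (l * k + r) R ·)
  rw [card_blockCols hb] at this
  rw [freeCols]
  omega

theorem card_le_mul_card_biUnion_freeCols (hr : r < k) (hineq : l * k ≤ (k - r) * (k - l))
    (hR : IsSudokuRect k (l * k + r) R) {b : ℕ} (hb : b < k) :
    ∀ S ⊆ missingSymbols k l r R b, #S ≤ (k - r) * #(S.biUnion (freeCols k l r R b)) := by
  intro S hS
  rcases S.eq_empty_or_nonempty with rfl | ⟨s₀, hs₀⟩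
  · simp
  by_cases hN : blockCols k b ⊆ S.biUnion (freeCols k l r R b)
  · calc #S ≤ #(missingSymbols k l r R b) := card_le_card hS
      _ = (k - r) * #(blockCols k b) := by rw [card_missingSymbols hr hR hb, card_blockCols hb]
      _ ≤ _ := Nat.mul_le_mul_left _ (card_le_card hN)
  obtain ⟨j, hjb, hjN⟩ := not_subset.mp hN
  obtain ⟨hj, rfl⟩ := mem_blockCols.mp hjb
  -- A column of the block that is free for no symbol of `S` holds all of `S` above the band.
  have hSj : S ⊆ colSymbols (l * k) R j := by
    intro s hs
    have hsj : s ∈ colSymbols (l * k + r) R j := by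
      by_contra h
      exact hjN (mem_biUnion.mpr ⟨s, hs, mem_filter.mpr ⟨hjb, h⟩⟩)
    obtain ⟨i, hi, his⟩ := exists_lt_of_mem_colSymbols_of_mem_missingSymbols hj (hS hs) hsj
    exact mem_colSymbols.mpr ⟨i, hi, his⟩
  calc #S ≤ l * k := (card_le_card hSj).trans (card_image_le.trans (card_range _).le)
    _ ≤ (k - r) * (k - l) := hineq
    _ ≤ (k - r) * #(S.biUnion (freeCols k l r R (j / k))) :=
      Nat.mul_le_mul_left _ ((sub_le_card_freeCols hR hb (hS hs₀)).trans
        (card_le_card (subset_biUnion_of_mem _ hs₀)))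

theorem card_le_mul_card_biUnion_freeCols_of_full_bands (hl : l < k)
    (hR : IsSudokuRect k (l * k) R) {b : ℕ} (hb : b < k) :
    ∀ S ⊆ missingSymbols k l 0 R b, #S ≤ k * #(S.biUnion (freeCols k l 0 R b)) := by
  intro S hS
  -- Double count the pairs (symbol, free column): each symbol has at least `k - l` free columns,
  -- and each column misses only `k ^ 2 - l * k` symbols.
  have hcount := card_mul_le_card_mul (fun s j => j ∈ freeCols k l 0 R b s)
    (s := S) (t := S.biUnion (freeCols k l 0 R b)) (m := k - l) (n := (k - l) * k)
    (fun s hs => ?_) fun j hj => ?_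
  · exact Nat.le_of_mul_le_mul_right (hcount.trans_eq (by ring)) (Nat.sub_pos_of_lt hl)
  · rw [bipartiteAbove, filter_mem_eq_inter, inter_eq_right.mpr (subset_biUnion_of_mem _ hs)]
    exact sub_le_card_freeCols hR hb (hS hs)
  · obtain ⟨s, -, hjs⟩ := mem_biUnion.mp hj
    have hj : j < k ^ 2 := (mem_blockCols.mp (mem_filter.mp hjs).1).1
    calc #(S.bipartiteBelow _ j) ≤ #(Icc 1 (k ^ 2) \ colSymbols (l * k) R j) := by
          refine card_le_card fun s hs => ?_
          obtain ⟨hsS, hjs⟩ := mem_filter.mp hs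
          exact mem_sdiff.mpr ⟨(mem_sdiff.mp (hS hsS)).1, (mem_filter.mp hjs).2⟩
      _ = (k - l) * k := by
          rw [card_sdiff_of_subset (colSymbols_subset hR hj), card_colSymbols hR hj,
            Nat.card_Icc, Nat.sub_mul, sq]
          omega

theorem isSudokuRect_append_band (hr : r < k) (hR : IsSudokuRect k (l * k + r) R)
    {F : ℕ → ℕ → ℕ}
    (hF_missing : ∀ x < k - r, ∀ j < k ^ 2, F x j ∈ missingSymbols k l r R (j / k))
    (hF_col : ∀ x < k - r, ∀ j < k ^ 2, F x j ∉ colSymbols (l * k + r) R j)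
    (hF_row : ∀ x < k - r, ∀ j₁ < k ^ 2, ∀ j₂ < k ^ 2, F x j₁ = F x j₂ → j₁ = j₂)
    (hF_block : ∀ x₁ < k - r, ∀ x₂ < k - r, ∀ j₁ < k ^ 2, ∀ j₂ < k ^ 2, j₁ / k = j₂ / k →
      F x₁ j₁ = F x₂ j₂ → x₁ = x₂ ∧ j₁ = j₂) :
    IsSudokuRect k ((l + 1) * k)
      fun i j => if i < l * k + r then R i j else F (i - (l * k + r)) j := by
  set m := l * k + r
  have hnew : ∀ i < (l + 1) * k, ¬i < m → i - m < k - r := fun i hi him => by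
    rw [add_one_mul] at hi
    omega
  have hcol : ∀ i₁ < m, ∀ i₂ < (l + 1) * k, ¬i₂ < m → ∀ j < k ^ 2,
      R i₁ j ≠ F (i₂ - m) j := fun i₁ hi₁ i₂ hi₂ him₂ j hj h =>
    hF_col _ (hnew i₂ hi₂ him₂) j hj (mem_colSymbols.mpr ⟨i₁, hi₁, h⟩)
  have hblock : ∀ i₁ < m, ∀ i₂ < (l + 1) * k, ¬i₂ < m → ∀ j₁ j₂, j₁ < k ^ 2 → j₂ < k ^ 2 →
      i₁ / k = i₂ / k → j₁ / k = j₂ / k → R i₁ j₁ ≠ F (i₂ - m) j₂ := by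
    intro i₁ hi₁ i₂ hi₂ him₂ j₁ j₂ hj₁ hj₂ hi hj h
    have hband : i₁ / k = l := hi.trans (Nat.div_eq_of_lt_le (by omega) hi₂)
    refine (mem_sdiff.mp (hF_missing _ (hnew i₂ hi₂ him₂) j₂ hj₂)).2 ?_
    refine mem_partialBlockSymbols.mpr ⟨i₁, ?_, hi₁, j₁, ⟨hj₁, hj⟩, h⟩
    exact hband ▸ Nat.div_mul_le_self i₁ k
  refine .of_block_inj (fun i hi j hj => ?_) (fun i hi j₁ hj₁ j₂ hj₂ h => ?_)
    (fun j hj i₁ hi₁ i₂ hi₂ h => ?_) fun i₁ hi₁ i₂ hi₂ j₁ hj₁ j₂ hj₂ hi hj h => ?_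
  · split_ifs with him
    · exact hR.1 i him j hj
    · exact (mem_sdiff.mp (hF_missing _ (hnew i hi him) j hj)).1
  · split_ifs at h with him
    · exact hR.2.1 i him j₁ hj₁ j₂ hj₂ h
    · exact hF_row _ (hnew i hi him) j₁ hj₁ j₂ hj₂ h
  · split_ifs at h with him₁ him₂ him₂
    · exact hR.2.2.1 j hj i₁ him₁ i₂ him₂ h
    · exact absurd h (hcol i₁ him₁ i₂ hi₂ him₂ j hj)
    · exact absurd h.symm (hcol i₂ him₂ i₁ hi₁ him₁ j hj)
    · have := (hF_block _ (hnew i₁ hi₁ him₁) _ (hnew i₂ hi₂ him₂) j hj j hj rfl h).1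
      omega
  · split_ifs at h with him₁ him₂ him₂
    · exact hR.block_inj him₁ him₂ hj₁ hi hj h
    · exact absurd h (hblock i₁ him₁ i₂ hi₂ him₂ j₁ j₂ hj₁ hj₂ hi hj)
    · exact absurd h.symm (hblock i₂ him₂ i₁ hi₁ him₁ j₂ j₁ hj₂ hj₁ hi.symm hj.symm)
    · have := hF_block _ (hnew i₁ hi₁ him₁) _ (hnew i₂ hi₂ him₂) j₁ hj₁ j₂ hj₂ hj h
      exact ⟨by omega, this.2⟩

/-- `g b s` is the column of block column `b` that receives its missing symbol `s`. -/
def assignedCols (k l r : ℕ) (R : ℕ → ℕ → ℕ) (g : ℕ → ℕ → ℕ) (s : ℕ) : Finset ℕ :=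
  {j ∈ range (k ^ 2) | s ∈ missingSymbols k l r R (j / k) ∧ g (j / k) s = j}

theorem card_assignedCols (hr : r < k) (hR : IsSudokuRect k (l * k + r) R) {g : ℕ → ℕ → ℕ}
    (hg_free : ∀ b < k, ∀ s ∈ missingSymbols k l r R b, g b s ∈ freeCols k l r R b s)
    {s : ℕ} (hs : s ∈ Icc 1 (k ^ 2)) : #(assignedCols k l r R g s) = k - r := by
  have hg_div : ∀ b < k, s ∈ missingSymbols k l r R b → g b s < k ^ 2 ∧ g b s / k = b :=
    fun b hb hsb => mem_blockCols.mp (mem_filter.mp (hg_free b hb s hsb)).1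
  have : assignedCols k l r R g s =
      {b ∈ range k | s ∈ missingSymbols k l r R b}.image (g · s) := by
    ext j
    simp only [assignedCols, mem_filter, mem_image, mem_range]
    constructor
    · rintro ⟨hj, hsj, hgj⟩
      exact ⟨j / k, ⟨Nat.div_lt_of_lt_mul (by rwa [← sq]), hsj⟩, hgj⟩
    · rintro ⟨b, ⟨hb, hsb⟩, rfl⟩
      obtain ⟨hgb, hgb_div⟩ := hg_div b hb hsb
      exact ⟨hgb, by rwa [hgb_div], by rw [hgb_div]⟩
  rw [this, card_image_of_injOn, card_filter_mem_missingSymbols hr hR hs]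
  intro b₁ hb₁ b₂ hb₂ h
  obtain ⟨hb₁, hsb₁⟩ := mem_filter.mp hb₁
  obtain ⟨hb₂, hsb₂⟩ := mem_filter.mp hb₂
  rw [← (hg_div b₁ (mem_range.mp hb₁) hsb₁).2, ← (hg_div b₂ (mem_range.mp hb₂) hsb₂).2]
  exact congrArg (· / k) h

theorem card_filter_mem_assignedCols {g : ℕ → ℕ → ℕ} {j : ℕ} (hj : j < k ^ 2)
    (hg_fiber : ∀ b < k, ∀ j ∈ blockCols k b,
      #{s ∈ missingSymbols k l r R b | g b s = j} = k - r) :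
    #{s ∈ Icc 1 (k ^ 2) | j ∈ assignedCols k l r R g s} = k - r := by
  have : {s ∈ Icc 1 (k ^ 2) | j ∈ assignedCols k l r R g s} =
      {s ∈ missingSymbols k l r R (j / k) | g (j / k) s = j} := by
    ext s
    simp only [assignedCols, mem_filter, mem_range, hj, true_and]
    exact ⟨fun h => h.2, fun h => ⟨(mem_sdiff.mp h.1).1, h⟩⟩
  rw [this]
  exact hg_fiber _ (Nat.div_lt_of_lt_mul (by rwa [← sq])) j (mem_blockCols.mpr ⟨hj, rfl⟩)

theorem exists_band_rows (hr : r < k) (hR : IsSudokuRect k (l * k + r) R) {g : ℕ → ℕ → ℕ}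
    (hg_free : ∀ b < k, ∀ s ∈ missingSymbols k l r R b, g b s ∈ freeCols k l r R b s)
    (hg_fiber : ∀ b < k, ∀ j ∈ blockCols k b,
      #{s ∈ missingSymbols k l r R b | g b s = j} = k - r) :
    ∃ F : ℕ → ℕ → ℕ,
      (∀ x < k - r, ∀ j < k ^ 2, F x j ∈ missingSymbols k l r R (j / k)) ∧
      (∀ x < k - r, ∀ j < k ^ 2, F x j ∉ colSymbols (l * k + r) R j) ∧
      (∀ x < k - r, ∀ j₁ < k ^ 2, ∀ j₂ < k ^ 2, F x j₁ = F x j₂ → j₁ = j₂) ∧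
      (∀ x₁ < k - r, ∀ x₂ < k - r, ∀ j₁ < k ^ 2, ∀ j₂ < k ^ 2, j₁ / k = j₂ / k →
        F x₁ j₁ = F x₂ j₂ → x₁ = x₂ ∧ j₁ = j₂) := by
  -- Row `x` of the new band is the inverse of the `x`-th perfect matching of the
  -- `(k - r)`-regular graph joining each symbol to its assigned columns.
  obtain ⟨σ, hσ_mem, hσ_bij, hσ_ne⟩ := exists_bijOn_family_of_regular (k - r)
    (assignedCols k l r R g) (by rw [Nat.card_Icc, card_range, Nat.add_sub_cancel])
    (fun _ _ => filter_subset _ _) (fun s hs => card_assignedCols hr hR hg_free hs)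
    fun j hj => card_filter_mem_assignedCols (mem_range.mp hj) hg_fiber
  set F : ℕ → ℕ → ℕ := fun x => Function.invFunOn (σ x) (Icc 1 (k ^ 2))
  have hF_Icc : ∀ x < k - r, ∀ j < k ^ 2, F x j ∈ Icc 1 (k ^ 2) := fun x hx j hj =>
    (hσ_bij x hx).surjOn.mapsTo_invFunOn (mem_range.mpr hj)
  have hσF : ∀ x < k - r, ∀ j < k ^ 2, σ x (F x j) = j := fun x hx j hj =>
    (hσ_bij x hx).surjOn.rightInvOn_invFunOn (mem_range.mpr hj)
  have hF_assigned : ∀ x < k - r, ∀ j < k ^ 2,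
      F x j ∈ missingSymbols k l r R (j / k) ∧ g (j / k) (F x j) = j := fun x hx j hj => by
    have := hσ_mem x hx _ (hF_Icc x hx j hj)
    rw [hσF x hx j hj] at this
    exact (mem_filter.mp this).2
  refine ⟨F, fun x hx j hj => (hF_assigned x hx j hj).1, fun x hx j hj => ?_,
    fun x hx j₁ hj₁ j₂ hj₂ h => ?_, fun x₁ hx₁ x₂ hx₂ j₁ hj₁ j₂ hj₂ hj h => ?_⟩
  · obtain ⟨hmiss, hg⟩ := hF_assigned x hx j hj
    have := (mem_filter.mp (hg_free _ (Nat.div_lt_of_lt_mul (by rwa [← sq])) _ hmiss)).2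
    rwa [hg] at this
  · rw [← hσF x hx j₁ hj₁, ← hσF x hx j₂ hj₂, h]
  · have hj₁₂ : j₁ = j₂ := by
      rw [← (hF_assigned x₁ hx₁ j₁ hj₁).2, ← (hF_assigned x₂ hx₂ j₂ hj₂).2, h, hj]
    refine ⟨hσ_ne _ (hF_Icc x₁ hx₁ j₁ hj₁) x₁ hx₁ x₂ hx₂ ?_, hj₁₂⟩
    rw [hσF x₁ hx₁ j₁ hj₁, h, hσF x₂ hx₂ j₂ hj₂, hj₁₂]

theorem exists_band_extension (hr : r < k) (hR : IsSudokuRect k (l * k + r) R)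
    (hall : ∀ b < k, ∀ S ⊆ missingSymbols k l r R b,
      #S ≤ (k - r) * #(S.biUnion (freeCols k l r R b))) :
    ∃ R' : ℕ → ℕ → ℕ, IsSudokuRect k ((l + 1) * k) R' ∧ ∀ i < l * k + r, ∀ j, R' i j = R i j := by
  have : ∀ b < k, ∃ g : ℕ → ℕ, (∀ s ∈ missingSymbols k l r R b, g s ∈ freeCols k l r R b s) ∧
      ∀ j ∈ blockCols k b, #{s ∈ missingSymbols k l r R b | g s = j} = k - r := fun b hb =>
    exists_card_fiber_eq_of_card_le_mul_card_biUnion _ _ (fun _ _ => filter_subset _ _)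
      (by rw [card_missingSymbols hr hR hb, card_blockCols hb]) (hall b hb)
  choose! g hg_free hg_fiber using this
  obtain ⟨F, hF_missing, hF_col, hF_row, hF_block⟩ := exists_band_rows hr hR hg_free hg_fiber
  exact ⟨_, isSudokuRect_append_band hr hR hF_missing hF_col hF_row hF_block,
    fun i hi j => if_pos hi⟩

theorem exists_completion_of_full_bands {t : ℕ} (ht : t ≤ k) (hR : IsSudokuRect k (t * k) R) :
    ∃ S : ℕ → ℕ → ℕ, IsSudokuRect k (k ^ 2) S ∧ ∀ i < t * k, ∀ j, S i j = R i j := by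
  induction h : k - t generalizing t R with
  | zero =>
    have htk : t = k := by omega
    exact ⟨R, hR.mono (by rw [htk, sq]), fun _ _ _ => rfl⟩
  | succ d ih =>
    obtain ⟨R', hR', hR'R⟩ := exists_band_extension (r := 0) (by omega) hR fun b hb S hS => by
      simpa using card_le_mul_card_biUnion_freeCols_of_full_bands (by omega) hR hb S hS
    obtain ⟨S, hS, hSR'⟩ := ih (by omega) hR' (by omega)
    exact ⟨S, hS, fun i hi j => (hSR' i (by nlinarith) j).trans (hR'R i hi j)⟩

end Sudoku

open Sudoku

/-- If m = lk + r with 0 ≤ l < k, 0 ≤ r < k and (k−r)(k−l) ≥ lk, then every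
m×k² Sudoku rectangle can be completed to a k²×k² Sudoku square. -/
theorem sudoku_rect_completable_of_ineq (k l r : ℕ) (hl : l < k) (hr : r < k)
    (hineq : l * k ≤ (k - r) * (k - l))
    (R : ℕ → ℕ → ℕ) (hR : IsSudokuRect k (l * k + r) R) :
    ∃ S : ℕ → ℕ → ℕ, CompletesTo k (l * k + r) R S := by
  obtain ⟨R', hR', hR'R⟩ := exists_band_extension hr hR fun b hb =>
    card_le_mul_card_biUnion_freeCols hr hineq hR hb
  obtain ⟨S, hS, hSR'⟩ := exists_completion_of_full_bands (t := l + 1) hl hR'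
  exact ⟨S, hS.isSudokuSquare, fun i hi j _ =>
    (hSR' i (by rw [add_one_mul]; omega) j).trans (hR'R i hi j)⟩
end

section
/- For every n = k² and m ≤ n, every (m, k, n)-Sudoku rectangle can be extended to an m×n Sudoku rectangle. -/
/-- `R` (restricted to its first m rows and first k columns) is an
(m, k, k²)-Sudoku rectangle: these cells are filled with entries from
{1,…,k²} satisfying the row, column and block conditions. -/
def IsSudokuSubRect (k m : ℕ) (R : ℕ → ℕ → ℕ) : Prop :=
  (∀ i < m, ∀ j < k, R i j ∈ Finset.Icc 1 (k ^ 2)) ∧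
  (∀ i < m, ∀ j₁ < k, ∀ j₂ < k, R i j₁ = R i j₂ → j₁ = j₂) ∧
  (∀ j < k, ∀ i₁ < m, ∀ i₂ < m, R i₁ j = R i₂ j → i₁ = i₂) ∧
  (∀ bi, ∀ x₁ < k, ∀ y₁ < k, ∀ x₂ < k, ∀ y₂ < k,
    bi * k + x₁ < m → bi * k + x₂ < m →
    R (bi * k + x₁) y₁ = R (bi * k + x₂) y₂ → x₁ = x₂ ∧ y₁ = y₂)

/-!
Fix a band of rows `b k, …, b k + k - 1`. By the block condition the first-block entries of its
given rows are disjoint `k`-sets, so they extend to a partition of `{1, …, k²}` into `k` classes of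
size `k`, labelled by `ZMod k` so that row `b k + x` gets class `x`. In block column `bj`, row
`b k + x` receives the symbols of class `x - bj`: each row then meets every class once and each
block meets every class once. Within a block column the symbols are ordered by a 1-factorization:
joining each of the `k²` rows to its `k` symbols gives a `k`-regular bipartite graph on `k² + k²`
vertices, which by Hall's theorem splits into `k` perfect matchings, one per column.
-/

open Finset Function

section RegularBipartite

variable {ι α : Type*} [Fintype ι] [DecidableEq α]

theorem exists_injective_mem_of_card_eq_of_degree_le {r : ℕ} (hr : 0 < r) (S : Finset α)
    (A : ι → Finset α) (hAS : ∀ i, A i ⊆ S) (hA : ∀ i, #(A i) = r)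
    (hdeg : ∀ a ∈ S, #{i | a ∈ A i} ≤ r) :
    ∃ f : ι → α, Injective f ∧ ∀ i, f i ∈ A i := by
  refine (all_card_le_biUnion_card_iff_exists_injective A).1 fun s => ?_
  refine Nat.le_of_mul_le_mul_right
    (card_mul_le_card_mul (fun i a => a ∈ A i) (fun i hi => ?_) (fun a ha => ?_)) hr
  · rw [bipartiteAbove, filter_mem_eq_inter, inter_eq_right.2 (subset_biUnion_of_mem A hi), hA]
  · obtain ⟨i, -, hai⟩ := mem_biUnion.1 ha
    exact (card_le_card (filter_subset_filter _ (subset_univ s))).trans (hdeg a (hAS i hai))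

theorem exists_one_factorization [DecidableEq ι] (S : Finset α) (hS : #S = Fintype.card ι) {r : ℕ}
    (A : ι → Finset α) (hAS : ∀ i, A i ⊆ S) (hA : ∀ i, #(A i) = r)
    (hdeg : ∀ a ∈ S, #{i | a ∈ A i} = r) :
    ∃ F : ι → Fin r → α, (∀ i c, F i c ∈ A i) ∧ (∀ c, Injective (F · c)) ∧
      ∀ i, Injective (F i) := by
  induction r generalizing A with
  | zero =>
    exact ⟨fun _ => Fin.elim0, fun _ c => c.elim0, fun c => c.elim0,
      fun _ => injective_of_subsingleton _⟩
  | succ r ih =>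
    obtain ⟨f, hf, hfA⟩ := exists_injective_mem_of_card_eq_of_degree_le r.succ_pos S A hAS hA
      fun a ha => (hdeg a ha).le
    have hfS : univ.image f = S :=
      eq_of_subset_of_card_le (image_subset_iff.2 fun i _ => hAS i (hfA i))
        (by rw [card_image_of_injective _ hf, card_univ, hS])
    set A' : ι → Finset α := fun i => (A i).erase (f i)
    have hdeg' : ∀ a ∈ S, #{i | a ∈ A' i} = r := by
      intro a ha
      obtain ⟨i₀, -, rfl⟩ := mem_image.1 (hfS ▸ ha)
      have : ({i | f i₀ ∈ A' i} : Finset ι) = ({i | f i₀ ∈ A i} : Finset ι).erase i₀ := by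
        ext i
        simp only [A', mem_filter, mem_erase, mem_univ, true_and, hf.ne_iff]
        tauto
      rw [this, card_erase_of_mem (by simpa using hfA i₀), hdeg _ ha, Nat.add_sub_cancel]
    obtain ⟨F, hFA, hFcol, hFrow⟩ := ih A' (fun i => (erase_subset _ _).trans (hAS i))
      (fun i => by rw [card_erase_of_mem (hfA i), hA, Nat.add_sub_cancel]) hdeg'
    refine ⟨fun i => Fin.cons (f i) (F i), fun i c => ?_, fun c => ?_, fun i => ?_⟩
    · cases c using Fin.cases with
      | zero => exact hfA i
      | succ c => exact mem_of_mem_erase (hFA i c)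
    · cases c using Fin.cases with
      | zero => simpa using hf
      | succ c => simpa using hFcol c
    · exact Fin.cons_injective_iff.2 ⟨fun ⟨c, hc⟩ => ne_of_mem_erase (hFA i c) hc, hFrow i⟩

end RegularBipartite

section Equipartition

variable {α κ : Type*} [DecidableEq α] [Fintype κ] [DecidableEq κ] [Nonempty κ]

theorem exists_fiber_card_eq_of_pairwiseDisjoint_cover {k : ℕ} (S : Finset α)
    (hS : #S = Fintype.card κ * k) (G : κ → Finset α) (hGS : ∀ c, G c ⊆ S) (hG : ∀ c, #(G c) = k)
    (hdisj : (Set.univ : Set κ).PairwiseDisjoint G) :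
    ∃ C : α → κ, (∀ c, #{s ∈ S | C s = c} = k) ∧ ∀ c, ∀ s ∈ G c, C s = c := by
  have hcover : univ.biUnion G = S := by
    refine eq_of_subset_of_card_le (biUnion_subset.2 fun c _ => hGS c) ?_
    rw [card_biUnion (by simpa using hdisj), sum_congr rfl fun c _ => hG c, sum_const, card_univ,
      smul_eq_mul, hS]
  classical
  set C : α → κ := fun s => if h : ∃ c, s ∈ G c then h.choose else Classical.arbitrary κ
  have hC : ∀ c, ∀ s ∈ G c, C s = c := fun c s hs => by
    have h : ∃ c, s ∈ G c := ⟨c, hs⟩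
    simp only [C, dif_pos h]
    exact hdisj.elim_finset (Set.mem_univ _) (Set.mem_univ _) s h.choose_spec hs
  refine ⟨C, fun c => ?_, hC⟩
  suffices {s ∈ S | C s = c} = G c by rw [this, hG]
  ext s
  constructor
  · intro hs
    obtain ⟨hsS, rfl⟩ := mem_filter.1 hs
    obtain ⟨c', -, hs'⟩ := mem_biUnion.1 (hcover ▸ hsS)
    rwa [hC c' s hs']
  · intro hs
    exact mem_filter.2 ⟨hGS c hs, hC c s hs⟩

theorem exists_fiber_card_eq_extending {k : ℕ} (S : Finset α) (hS : #S = Fintype.card κ * k)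
    (D : Finset κ) (G : κ → Finset α) (hGS : ∀ c ∈ D, G c ⊆ S) (hG : ∀ c ∈ D, #(G c) = k)
    (hdisj : (D : Set κ).PairwiseDisjoint G) :
    ∃ C : α → κ, (∀ c, #{s ∈ S | C s = c} = k) ∧ ∀ c ∈ D, ∀ s ∈ G c, C s = c := by
  induction hn : #Dᶜ generalizing D G with
  | zero =>
    obtain rfl : D = univ := by simpa using hn
    simpa using exists_fiber_card_eq_of_pairwiseDisjoint_cover S hS G (by simpa using hGS)
      (by simpa using hG) (by simpa using hdisj)
  | succ n ih =>
    obtain ⟨c₀, hc₀⟩ : Dᶜ.Nonempty := card_pos.1 (by omega)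
    have hc₀D : c₀ ∉ D := mem_compl.1 hc₀
    have hfree : k ≤ #(S \ D.biUnion G) := by
      rw [card_sdiff_of_subset (biUnion_subset.2 hGS), card_biUnion hdisj,
        sum_congr rfl hG, sum_const, smul_eq_mul, hS]
      have : #D + (n + 1) = Fintype.card κ := by rw [← hn, card_add_card_compl]
      rw [← this, add_mul, Nat.add_sub_cancel_left]
      exact Nat.le_mul_of_pos_left k n.succ_pos
    obtain ⟨T, hTfree, hT⟩ := exists_subset_card_eq hfree
    have hGT : ∀ c ∈ D, update G c₀ T c = G c := fun c hc => update_of_ne (by grind) _ _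
    have hGS' : ∀ c ∈ insert c₀ D, update G c₀ T c ⊆ S := by
      intro c hc
      rcases mem_insert.1 hc with rfl | hc
      · simpa using hTfree.trans sdiff_subset
      · simpa [hGT c hc] using hGS c hc
    have hG' : ∀ c ∈ insert c₀ D, #(update G c₀ T c) = k := by
      intro c hc
      rcases mem_insert.1 hc with rfl | hc
      · simpa using hT
      · simpa [hGT c hc] using hG c hc
    have hdisj' : (↑(insert c₀ D) : Set κ).PairwiseDisjoint (update G c₀ T) := by
      rw [coe_insert]
      refine Set.PairwiseDisjoint.insert (fun a ha b hb hab => ?_) fun c hc _ => ?_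
      · simpa [onFun, hGT a ha, hGT b hb] using hdisj ha hb hab
      · rw [update_self, hGT c hc]
        exact disjoint_of_subset_left hTfree
          (disjoint_sdiff_self_left.mono_right (subset_biUnion_of_mem G hc))
    have hn' : #(insert c₀ D)ᶜ = n := by
      rw [card_compl, card_insert_of_notMem hc₀D, ← Nat.sub_sub, ← card_compl, hn,
        Nat.add_sub_cancel]
    obtain ⟨C, hCfib, hCG⟩ := ih (insert c₀ D) (update G c₀ T) hGS' hG' hdisj' hn'
    refine ⟨C, hCfib, fun c hc s hs => hCG c (mem_insert_of_mem hc) s ?_⟩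
    rwa [hGT c hc]

end Equipartition

section Sudoku

variable {k m : ℕ}

theorem Nat.mul_add_div_of_lt {b y : ℕ} (hy : y < k) : (b * k + y) / k = b := by
  rw [add_comm, Nat.add_mul_div_right _ _ (by omega), Nat.div_eq_of_lt hy, zero_add]

theorem ZMod.eq_of_natCast_eq_of_lt {a b : ℕ} (ha : a < k) (hb : b < k)
    (h : (a : ZMod k) = b) : a = b := by
  rwa [ZMod.natCast_eq_natCast_iff', Nat.mod_eq_of_lt ha, Nat.mod_eq_of_lt hb] at h

theorem ZMod.natCast_mul_add_self (b x : ℕ) : ((b * k + x : ℕ) : ZMod k) = x := by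
  simp

/-- `F i y` is the entry in row `i` and column `bj * k + y`, and `C b` assigns each symbol its
class in band `b`: row `i` of block column `bj` uses only symbols of class `i - bj`. -/
structure IsShiftedBlockColumn (k m : ℕ) (C : ℕ → ℕ → ZMod k) (bj : ℕ) (F : ℕ → ℕ → ℕ) :
    Prop where
  mem : ∀ i < m, ∀ y < k, F i y ∈ Icc 1 (k ^ 2)
  class_add : ∀ i < m, ∀ y < k, C (i / k) (F i y) + bj = i
  row_inj : ∀ i < m, ∀ y₁ < k, ∀ y₂ < k, F i y₁ = F i y₂ → y₁ = y₂
  col_inj : ∀ y < k, ∀ i₁ < m, ∀ i₂ < m, F i₁ y = F i₂ y → i₁ = i₂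

theorem div_lt_and_mod_lt_of_lt_sq {j : ℕ} (hj : j < k ^ 2) : j / k < k ∧ j % k < k := by
  have hk : 0 < k := Nat.pos_of_ne_zero (by rintro rfl; simp at hj)
  exact ⟨Nat.div_lt_of_lt_mul (by rwa [sq] at hj), Nat.mod_lt _ hk⟩

theorem isSudokuRect_of_isShiftedBlockColumn {C : ℕ → ℕ → ZMod k} {F : ℕ → ℕ → ℕ → ℕ}
    (hF : ∀ bj < k, IsShiftedBlockColumn k m C bj (F bj)) :
    IsSudokuRect k m fun i j => F (j / k) i (j % k) := by
  refine ⟨fun i hi j hj => ?_, fun i hi j₁ hj₁ j₂ hj₂ h => ?_, fun j hj i₁ hi₁ i₂ hi₂ h => ?_,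
    fun bi bj hbj x₁ hx₁ y₁ hy₁ x₂ hx₂ y₂ hy₂ hr₁ hr₂ h => ?_⟩
  · obtain ⟨hdiv, hmod⟩ := div_lt_and_mod_lt_of_lt_sq hj
    exact (hF _ hdiv).mem i hi _ hmod
  · obtain ⟨hdiv₁, hmod₁⟩ := div_lt_and_mod_lt_of_lt_sq hj₁
    obtain ⟨hdiv₂, hmod₂⟩ := div_lt_and_mod_lt_of_lt_sq hj₂
    beta_reduce at h
    have hdiv : j₁ / k = j₂ / k := by
      refine ZMod.eq_of_natCast_eq_of_lt hdiv₁ hdiv₂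
        (add_left_cancel (a := C (i / k) (F (j₁ / k) i (j₁ % k))) ?_)
      rw [(hF _ hdiv₁).class_add i hi _ hmod₁, h, (hF _ hdiv₂).class_add i hi _ hmod₂]
    rw [hdiv] at h
    exact Nat.ext_div_mod hdiv ((hF _ hdiv₂).row_inj i hi _ hmod₁ _ hmod₂ h)
  · obtain ⟨hdiv, hmod⟩ := div_lt_and_mod_lt_of_lt_sq hj
    exact (hF _ hdiv).col_inj _ hmod i₁ hi₁ i₂ hi₂ h
  · simp only [Nat.mul_add_div_of_lt hy₁, Nat.mul_add_div_of_lt hy₂, Nat.mul_add_mod_of_lt hy₁,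
      Nat.mul_add_mod_of_lt hy₂] at h
    have hx : x₁ = x₂ := by
      refine ZMod.eq_of_natCast_eq_of_lt hx₁ hx₂ ?_
      have h₁ := (hF bj hbj).class_add _ hr₁ y₁ hy₁
      have h₂ := (hF bj hbj).class_add _ hr₂ y₂ hy₂
      rw [Nat.mul_add_div_of_lt hx₁, h] at h₁
      rw [Nat.mul_add_div_of_lt hx₂] at h₂
      rw [← ZMod.natCast_mul_add_self bi x₁, ← ZMod.natCast_mul_add_self bi x₂, ← h₁, h₂]
    subst hx
    exact ⟨rfl, (hF bj hbj).row_inj _ hr₁ y₁ hy₁ y₂ hy₂ h⟩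

theorem IsSudokuSubRect.isShiftedBlockColumn_zero {R : ℕ → ℕ → ℕ} {C : ℕ → ℕ → ZMod k}
    (hR : IsSudokuSubRect k m R) (hC : ∀ i < m, ∀ y < k, C (i / k) (R i y) = i) :
    IsShiftedBlockColumn k m C 0 R where
  mem := hR.1
  class_add i hi y hy := by rw [Nat.cast_zero, add_zero, hC i hi y hy]
  row_inj := hR.2.1
  col_inj := hR.2.2.1

theorem IsSudokuSubRect.exists_bandClasses [NeZero k] {R : ℕ → ℕ → ℕ}
    (hR : IsSudokuSubRect k m R) (b : ℕ) :
    ∃ Cb : ℕ → ZMod k, (∀ c, #{s ∈ Icc 1 (k ^ 2) | Cb s = c} = k) ∧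
      ∀ i < m, i / k = b → ∀ y < k, Cb (R i y) = i := by
  obtain ⟨hmem, hrow, -, hblock⟩ := hR
  set G : ZMod k → Finset ℕ := fun c => (range k).image (R (b * k + c.val))
  set D : Finset (ZMod k) := {c | b * k + c.val < m}
  have hGS : ∀ c ∈ D, G c ⊆ Icc 1 (k ^ 2) := fun c hc =>
    image_subset_iff.2 fun y hy => hmem _ (mem_filter.1 hc).2 y (mem_range.1 hy)
  have hG : ∀ c ∈ D, #(G c) = k := fun c hc => by
    rw [card_image_of_injOn fun y₁ hy₁ y₂ hy₂ => hrow _ (mem_filter.1 hc).2 y₁ (mem_range.1 hy₁)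
      y₂ (mem_range.1 hy₂), card_range]
  have hdisj : (D : Set (ZMod k)).PairwiseDisjoint G := by
    intro c₁ hc₁ c₂ hc₂ hne
    refine disjoint_left.2 fun s hs₁ hs₂ => hne (ZMod.val_injective k ?_)
    obtain ⟨y₁, hy₁, rfl⟩ := mem_image.1 hs₁
    obtain ⟨y₂, hy₂, hy⟩ := mem_image.1 hs₂
    exact (hblock b _ (ZMod.val_lt c₁) y₁ (mem_range.1 hy₁) _ (ZMod.val_lt c₂) y₂
      (mem_range.1 hy₂) (mem_filter.1 hc₁).2 (mem_filter.1 hc₂).2 hy.symm).1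
  obtain ⟨Cb, hfib, hCG⟩ := exists_fiber_card_eq_extending (Icc 1 (k ^ 2))
    (by rw [Nat.card_Icc, ZMod.card, Nat.add_sub_cancel, sq]) D G hGS hG hdisj
  refine ⟨Cb, hfib, fun i hi hib y hy => ?_⟩
  have hi' : b * k + (i : ZMod k).val = i := by
    rw [ZMod.val_natCast, ← hib, mul_comm, Nat.div_add_mod]
  have hiD : (i : ZMod k) ∈ D := mem_filter.2 ⟨mem_univ _, hi'.symm ▸ hi⟩
  exact hCG i hiD _ (mem_image.2 ⟨y, mem_range.2 hy, by rw [hi']⟩)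

theorem exists_isShiftedBlockColumn [NeZero k] (hm : m ≤ k ^ 2) {C : ℕ → ℕ → ZMod k}
    (hC : ∀ b < k, ∀ c, #{s ∈ Icc 1 (k ^ 2) | C b s = c} = k) (bj : ℕ) :
    ∃ F, IsShiftedBlockColumn k m C bj F := by
  -- row `i` is indexed by `(i / k, i)`, its band and its offset within the band
  set A : ZMod k × ZMod k → Finset ℕ := fun p => {s ∈ Icc 1 (k ^ 2) | C p.1.val s + bj = p.2}
  have hA : ∀ p, #(A p) = k := fun p => by
    simp_rw [A, ← eq_sub_iff_add_eq]
    exact hC _ (ZMod.val_lt _) _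
  have hdeg : ∀ s ∈ Icc 1 (k ^ 2), #{p | s ∈ A p} = k := fun s hs => by
    have : ({p | s ∈ A p} : Finset (ZMod k × ZMod k)) =
        univ.image fun b => (b, C b.val s + bj) := by
      ext ⟨b, x⟩
      simp [A, hs, eq_comm]
    rw [this, card_image_of_injective _ fun _ _ h => congrArg Prod.fst h, card_univ, ZMod.card]
  obtain ⟨F, hFA, hFcol, hFrow⟩ := exists_one_factorization (Icc 1 (k ^ 2))
    (by rw [Nat.card_Icc, Fintype.card_prod, ZMod.card, Nat.add_sub_cancel, sq]) A
    (fun p => filter_subset _ _) hA hdeg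
  have hrow : ∀ i < m, i / k < k := fun i hi => Nat.div_lt_of_lt_mul (by rw [← sq]; omega)
  refine ⟨fun i y => F (((i / k : ℕ) : ZMod k), (i : ZMod k)) (Fin.ofNat k y),
    ⟨fun i hi y hy => ?_, fun i hi y hy => ?_, fun i hi y₁ hy₁ y₂ hy₂ h => ?_,
      fun y hy i₁ hi₁ i₂ hi₂ h => ?_⟩⟩
  · exact (mem_filter.1 (hFA _ _)).1
  · simpa [ZMod.val_cast_of_lt (hrow i hi)] using
      (mem_filter.1 (hFA ((i / k : ℕ), (i : ZMod k)) (Fin.ofNat k y))).2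
  · simpa [Nat.mod_eq_of_lt hy₁, Nat.mod_eq_of_lt hy₂] using congrArg Fin.val (hFrow _ h)
  · obtain ⟨hdiv, hmod⟩ := Prod.ext_iff.1 (hFcol _ h)
    exact Nat.ext_div_mod (ZMod.eq_of_natCast_eq_of_lt (hrow i₁ hi₁) (hrow i₂ hi₂) hdiv)
      ((ZMod.natCast_eq_natCast_iff' _ _ _).1 hmod)

end Sudoku

/-- Every (m, k, k²)-Sudoku rectangle can be extended to an m×k² Sudoku
rectangle (keeping the originally filled cells unchanged). -/
theorem sudoku_subrect_extension (k m : ℕ) (hm : m ≤ k ^ 2)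
    (R : ℕ → ℕ → ℕ) (hR : IsSudokuSubRect k m R) :
    ∃ R' : ℕ → ℕ → ℕ, IsSudokuRect k m R' ∧ ∀ i < m, ∀ j < k, R' i j = R i j := by
  obtain rfl | hk := eq_zero_or_neZero k
  · exact ⟨R, by simp_all [IsSudokuRect], by simp⟩
  choose C hCfib hCR using hR.exists_bandClasses
  choose F hF using exists_isShiftedBlockColumn hm fun b _ => hCfib b
  refine ⟨fun i j => (if j / k = 0 then R else F (j / k)) i (j % k),
    isSudokuRect_of_isShiftedBlockColumn (C := C) (F := fun bj => if bj = 0 then R else F bj)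
      fun bj _ => ?_, fun i _ j hj => ?_⟩
  · split_ifs with h
    · exact h ▸ hR.isShiftedBlockColumn_zero fun i hi y hy => hCR _ i hi rfl y hy
    · exact hF bj
  · simp [Nat.div_eq_of_lt hj, Nat.mod_eq_of_lt hj]
end
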